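/- Let K: ℝ³ → ℝ be continuous with |K(p)p| ≤ k₀ for all p. Then for any C¹ map u: ℝ² → ℝ³ with finite Dirichlet energy and any t₁, t₂ > 0, |∫_{ℝ²}(Q_K(t₁u) - Q_K(t₂u))·(u_x ∧ u_y)| ≤ 2k₀ |log(t₂/t₁)| · D(u), where Q_K(p) = (∫₀¹K(sp)s²ds)p and D(u) = (1/2)∫|∇u|². -/

import Mathlib

noncomputable section
open MeasureTheory Real Filter Set
open scoped Topology

/-- `ℝ³` with the Euclidean norm. -/
abbrev E3 := EuclideanSpace ℝ (Fin 3)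

/-- Cross product in `ℝ³`. -/
def cross (a b : E3) : E3 :=
  (EuclideanSpace.equiv (Fin 3) ℝ).symm
    ![a 1 * b 2 - a 2 * b 1, a 2 * b 0 - a 0 * b 2, a 0 * b 1 - a 1 * b 0]

/-- Euclidean dot product. -/
def dot (a b : E3) : ℝ := inner ℝ a b

/-- Partial derivative `u_x`. -/
def ux (u : ℝ × ℝ → E3) (z : ℝ × ℝ) : E3 := fderiv ℝ u z (1, 0)

/-- Partial derivative `u_y`. -/
def uy (u : ℝ × ℝ → E3) (z : ℝ × ℝ) : E3 := fderiv ℝ u z (0, 1)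

/-- Dirichlet density `|∇u|²`. -/
def dirDen (u : ℝ × ℝ → E3) (z : ℝ × ℝ) : ℝ := ‖ux u z‖ ^ 2 + ‖uy u z‖ ^ 2

/-- Dirichlet integral `D(u) = (1/2)∫|∇u|²`. -/
def Dir (u : ℝ × ℝ → E3) : ℝ := (1 / 2) * ∫ z : ℝ × ℝ, dirDen u z

/-- Algebraic volume `V(u) = (1/3)∫ u·(u_x ∧ u_y)`. -/
def Vol (u : ℝ × ℝ → E3) : ℝ := (1 / 3) * ∫ z : ℝ × ℝ, dot (u z) (cross (ux u z) (uy u z))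

/-- `m_K(p) = ∫₀¹ K(sp)s² ds`. -/
def mK (K : E3 → ℝ) (p : E3) : ℝ := ∫ s in (0:ℝ)..1, K (s • p) * s ^ 2

/-- The vector field `Q_K(p) = m_K(p)·p`. -/
def QK (K : E3 → ℝ) (p : E3) : E3 := mK K p • p

/-! Along a ray, `∂ₜ Q_K(t p) = t⁻¹ (K(t p) t p - 2 Q_K(t p))`, and both terms have norm at most
`k₀` because `|Q_K(q)| ≤ k₀ / 2`. Hence `t ↦ Q_K(t p)` is `2 k₀`-Lipschitz as a function of
`log t`, and since `|u_x ∧ u_y| ≤ |∇u|² / 2` the integrand is bounded by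
`k₀ |log (t₂ / t₁)| |∇u|²`, whose integral is `2 k₀ |log (t₂ / t₁)| D(u)`. -/

lemma norm_sub_le_mul_abs_log_div_of_hasDerivAt {F : Type*} [NormedAddCommGroup F]
    [NormedSpace ℝ F] {f f' : ℝ → F} {C : ℝ}
    (hf : ∀ t, 0 < t → HasDerivAt f (f' t) t) (hf' : ∀ t, 0 < t → ‖f' t‖ ≤ C / t)
    {t₁ t₂ : ℝ} (ht₁ : 0 < t₁) (ht₂ : 0 < t₂) :
    ‖f t₁ - f t₂‖ ≤ C * |Real.log (t₂ / t₁)| := by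
  have hexp : ∀ s, HasDerivAt (f ∘ exp) (exp s • f' (exp s)) s := fun s =>
    (hf _ (exp_pos s)).scomp s (hasDerivAt_exp s)
  have hbound : ∀ s, ‖exp s • f' (exp s)‖ ≤ C := fun s => by
    rw [norm_smul, norm_of_nonneg (exp_pos s).le, ← le_div_iff₀' (exp_pos s)]
    exact hf' _ (exp_pos s)
  have hmvt := convex_univ.norm_image_sub_le_of_norm_hasDerivWithin_le
    (fun s _ => (hexp s).hasDerivWithinAt) (fun s _ => hbound s)
    (mem_univ (log t₂)) (mem_univ (log t₁))
  simpa [exp_log ht₁, exp_log ht₂, log_div ht₂.ne' ht₁.ne', abs_sub_comm] using hmvt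

lemma norm_QK_le {K : E3 → ℝ} {k₀ : ℝ} (hk : ∀ p : E3, |K p| * ‖p‖ ≤ k₀) (p : E3) :
    ‖QK K p‖ ≤ k₀ / 2 := by
  have hbound : ∀ s ∈ Ioc (0 : ℝ) 1, ‖K (s • p) * s ^ 2 * ‖p‖‖ ≤ k₀ * s := fun s hs => by
    have := hk (s • p)
    rw [norm_smul, norm_of_nonneg hs.1.le] at this
    rw [norm_mul, norm_mul, norm_norm, norm_pow, norm_of_nonneg hs.1.le, Real.norm_eq_abs]
    calc |K (s • p)| * s ^ 2 * ‖p‖ = (|K (s • p)| * (s * ‖p‖)) * s := by ring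
      _ ≤ k₀ * s := mul_le_mul_of_nonneg_right this hs.1.le
  calc ‖QK K p‖ = ‖∫ s in (0 : ℝ)..1, K (s • p) * s ^ 2 * ‖p‖‖ := by
        rw [QK, mK, norm_smul, intervalIntegral.integral_mul_const, norm_mul, norm_norm]
    _ ≤ ∫ s in (0 : ℝ)..1, k₀ * s :=
        intervalIntegral.norm_integral_le_of_norm_le zero_le_one
          (Eventually.of_forall hbound) ((continuous_const_mul k₀).intervalIntegrable _ _)
    _ = k₀ / 2 := by rw [intervalIntegral.integral_const_mul, integral_id]; ring

lemma mK_smul (K : E3 → ℝ) (p : E3) {t : ℝ} (ht : 0 < t) :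
    mK K (t • p) = (t ^ 3)⁻¹ * ∫ σ in (0 : ℝ)..t, K (σ • p) * σ ^ 2 := by
  have hrescale : ∀ s : ℝ, K (s • t • p) * s ^ 2 = (t ^ 2)⁻¹ * (K ((t * s) • p) * (t * s) ^ 2) :=
    fun s => by rw [smul_smul, mul_comm s t]; field_simp
  simp only [mK, hrescale, intervalIntegral.integral_const_mul,
    intervalIntegral.integral_comp_mul_left (fun σ => K (σ • p) * σ ^ 2) ht.ne', mul_zero,
    mul_one, smul_eq_mul]
  ring

lemma hasDerivAt_QK_smul {K : E3 → ℝ} (hK : Continuous K) (p : E3) {t : ℝ} (ht : 0 < t) :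
    HasDerivAt (fun t : ℝ => QK K (t • p))
      (t⁻¹ • (K (t • p) • t • p - (2 : ℝ) • QK K (t • p))) t := by
  have hG : HasDerivAt (fun t => ∫ σ in (0 : ℝ)..t, K (σ • p) * σ ^ 2) (K (t • p) * t ^ 2) t :=
    ((by fun_prop : Continuous fun σ : ℝ => K (σ • p) * σ ^ 2).integral_hasStrictDerivAt
      0 t).hasDerivAt
  have hQK : (fun t : ℝ => QK K (t • p)) =ᶠ[𝓝 t]
      fun t => ((t ^ 2)⁻¹ * ∫ σ in (0 : ℝ)..t, K (σ • p) * σ ^ 2) • p := by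
    filter_upwards [Ioi_mem_nhds ht] with s hs
    rw [QK, mK_smul K p hs, smul_smul]
    congr 1
    field_simp
  refine ((((hasDerivAt_pow 2 t).inv (by positivity)).mul hG).smul_const p).congr_of_eventuallyEq
    hQK |>.congr_deriv ?_
  rw [QK, mK_smul K p ht, smul_smul, smul_smul, smul_smul, ← sub_smul, smul_smul]
  congr 1
  simp only [Pi.inv_apply]
  field_simp
  ring

lemma norm_QK_smul_sub_le {K : E3 → ℝ} {k₀ : ℝ} (hK : Continuous K)
    (hk : ∀ p : E3, |K p| * ‖p‖ ≤ k₀) (p : E3) {t₁ t₂ : ℝ} (ht₁ : 0 < t₁) (ht₂ : 0 < t₂) :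
    ‖QK K (t₁ • p) - QK K (t₂ • p)‖ ≤ 2 * k₀ * |log (t₂ / t₁)| := by
  refine norm_sub_le_mul_abs_log_div_of_hasDerivAt (fun t ht => hasDerivAt_QK_smul hK p ht)
    (fun t ht => ?_) ht₁ ht₂
  have hradial : ‖K (t • p) • t • p‖ ≤ k₀ := by rw [norm_smul, Real.norm_eq_abs]; exact hk _
  have hQK : ‖(2 : ℝ) • QK K (t • p)‖ ≤ k₀ := by
    rw [norm_smul, Real.norm_two]; linarith [norm_QK_le hk (t • p)]
  calc ‖t⁻¹ • (K (t • p) • t • p - (2 : ℝ) • QK K (t • p))‖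
      = t⁻¹ * ‖K (t • p) • t • p - (2 : ℝ) • QK K (t • p)‖ := by
        rw [norm_smul, norm_inv, norm_of_nonneg ht.le]
    _ ≤ t⁻¹ * (k₀ + k₀) := by gcongr; exact (norm_sub_le _ _).trans (add_le_add hradial hQK)
    _ = 2 * k₀ / t := by ring

lemma norm_sq_E3 (v : E3) : ‖v‖ ^ 2 = v 0 ^ 2 + v 1 ^ 2 + v 2 ^ 2 := by
  rw [EuclideanSpace.norm_eq, sq_sqrt (by positivity)]
  simp [Fin.sum_univ_three, sq_abs]

lemma norm_cross_le (a b : E3) : ‖cross a b‖ ≤ ‖a‖ * ‖b‖ := by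
  refine (pow_le_pow_iff_left₀ (norm_nonneg _) (by positivity) two_ne_zero).1 ?_
  rw [mul_pow, norm_sq_E3, norm_sq_E3, norm_sq_E3]
  have h0 : cross a b 0 = a 1 * b 2 - a 2 * b 1 := rfl
  have h1 : cross a b 1 = a 2 * b 0 - a 0 * b 2 := rfl
  have h2 : cross a b 2 = a 0 * b 1 - a 1 * b 0 := rfl
  rw [h0, h1, h2]
  -- Lagrange's identity: `‖a × b‖² = ‖a‖² ‖b‖² - (a ⬝ b)²`.
  nlinarith [sq_nonneg (a 0 * b 0 + a 1 * b 1 + a 2 * b 2)]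

lemma abs_dot_cross_le (q a b : E3) : |dot q (cross a b)| ≤ ‖q‖ * ((‖a‖ ^ 2 + ‖b‖ ^ 2) / 2) :=
  calc |dot q (cross a b)| ≤ ‖q‖ * ‖cross a b‖ := abs_real_inner_le_norm _ _
    _ ≤ ‖q‖ * ((‖a‖ ^ 2 + ‖b‖ ^ 2) / 2) := by
      gcongr
      nlinarith [norm_cross_le a b, sq_nonneg (‖a‖ - ‖b‖)]

theorem stmt18_general (K : E3 → ℝ) (k₀ : ℝ) (hK : Continuous K)
    (hk : ∀ p : E3, |K p| * ‖p‖ ≤ k₀)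
    (u : ℝ × ℝ → E3) (hDint : Integrable (dirDen u))
    (t₁ t₂ : ℝ) (ht₁ : 0 < t₁) (ht₂ : 0 < t₂) :
    |∫ z : ℝ × ℝ, dot (QK K (t₁ • u z) - QK K (t₂ • u z)) (cross (ux u z) (uy u z))|
      ≤ 2 * k₀ * |Real.log (t₂ / t₁)| * Dir u := by
  set L := |Real.log (t₂ / t₁)|
  have hpointwise : ∀ z, ‖dot (QK K (t₁ • u z) - QK K (t₂ • u z)) (cross (ux u z) (uy u z))‖
      ≤ k₀ * L * dirDen u z := fun z =>
    calc _ ≤ ‖QK K (t₁ • u z) - QK K (t₂ • u z)‖ * (dirDen u z / 2) := abs_dot_cross_le _ _ _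
      _ ≤ 2 * k₀ * L * (dirDen u z / 2) := by
        gcongr
        · exact div_nonneg (by unfold dirDen; positivity) zero_le_two
        · exact norm_QK_smul_sub_le hK hk (u z) ht₁ ht₂
      _ = k₀ * L * dirDen u z := by ring
  calc _ ≤ ∫ z, k₀ * L * dirDen u z :=
        norm_integral_le_of_norm_le (hDint.const_mul _) (Eventually.of_forall hpointwise)
    _ = 2 * k₀ * L * Dir u := by rw [integral_const_mul, Dir]; ring

/-- Log-Lipschitz estimate in the scaling parameter:
`|∫ (Q_K(t₁u) - Q_K(t₂u))·(u_x ∧ u_y)| ≤ 2k₀|log(t₂/t₁)|·D(u)`. -/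
theorem stmt18 (K : E3 → ℝ) (k₀ : ℝ) (hK : Continuous K)
    (hk : ∀ p : E3, |K p| * ‖p‖ ≤ k₀)
    (u : ℝ × ℝ → E3) (hu : ContDiff ℝ 1 u) (hDint : Integrable (dirDen u))
    (t₁ t₂ : ℝ) (ht₁ : 0 < t₁) (ht₂ : 0 < t₂) :
    |∫ z : ℝ × ℝ, dot (QK K (t₁ • u z) - QK K (t₂ • u z)) (cross (ux u z) (uy u z))|
      ≤ 2 * k₀ * |Real.log (t₂ / t₁)| * Dir u :=
  stmt18_general K k₀ hK hk u hDint t₁ t₂ ht₁ ht₂
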